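/- Let C > 0 and 0 < α < 1 be constants such that Δ_ρ^S(m) ≤ C m^α and N_ρ^S(m) ≤ exp(C m^α) for all m (inverted orbit bounds for the action of the first Grigorchuk group on the orbit of ρ = 1^∞). Then there is a constant C_3 > 0 such that |P_3(ℓ)| ≤ exp(C_3 ℓ^α log ℓ) for every sufficiently large n and every ℓ ≤ r_n/3. -/

import Mathlib

noncomputable section

/-! ### Generalities: the group of self-homeomorphisms -/

instance homeoGroup {X : Type*} [TopologicalSpace X] : Group (X ≃ₜ X) where
  mul f g := g.trans f
  one := Homeomorph.refl X
  inv := Homeomorph.symm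
  mul_assoc a b c := Homeomorph.ext fun _ => rfl
  one_mul a := Homeomorph.ext fun _ => rfl
  mul_one a := Homeomorph.ext fun _ => rfl
  inv_mul_cancel a := Homeomorph.ext a.symm_apply_apply

/-! ### Homeomorphisms of a product with a discrete factor -/

theorem cont_fibered {X Y Z : Type*} [TopologicalSpace X] [TopologicalSpace Y]
    [DiscreteTopology Y] [TopologicalSpace Z] (f : X → Y → Z) (hf : ∀ y, Continuous (f · y)) :
    Continuous (fun p : X × Y => f p.1 p.2) := by
  rw [continuous_iff_continuousAt]
  rintro ⟨x, y⟩
  have hmem : {p : X × Y | p.2 = y} ∈ nhds (x, y) := by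
    have ho : IsOpen {p : X × Y | p.2 = y} := by
      have h : ({p : X × Y | p.2 = y}) = Prod.snd ⁻¹' {y} := rfl
      rw [h]; exact (isOpen_discrete _).preimage continuous_snd
    exact ho.mem_nhds rfl
  refine ContinuousAt.congr (((hf y).comp continuous_fst).continuousAt) ?_
  filter_upwards [hmem] with p hp
  simp [hp]

/-- The homeomorphism of `X × Y`, `Y` discrete, acting on each fiber `X × {y}`
by the homeomorphism `F y`. -/
def fiberedHomeo {X Y : Type*} [TopologicalSpace X] [TopologicalSpace Y] [DiscreteTopology Y]
    (F : Y → X ≃ₜ X) : (X × Y) ≃ₜ (X × Y) where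
  toEquiv := Equiv.prodCongrLeft fun y => (F y).toEquiv
  continuous_toFun := by
    refine Continuous.prodMk ?_ continuous_snd
    exact cont_fibered (fun x y => F y x) (fun y => (F y).continuous)
  continuous_invFun := by
    refine Continuous.prodMk ?_ continuous_snd
    exact cont_fibered (fun x y => (F y).symm x) (fun y => (F y).symm.continuous)

/-- The homeomorphism of `X × Y`, `Y` discrete, permuting the fibers according to a
permutation of `Y` and acting trivially in the `X`-coordinate. -/
def basePermHomeo {X Y : Type*} [TopologicalSpace X] [TopologicalSpace Y] [DiscreteTopology Y]
    (e : Equiv.Perm Y) : (X × Y) ≃ₜ (X × Y) where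
  toEquiv := Equiv.prodCongr (Equiv.refl X) e
  continuous_toFun :=
    continuous_fst.prodMk (continuous_of_discreteTopology.comp continuous_snd)
  continuous_invFun :=
    continuous_fst.prodMk (continuous_of_discreteTopology.comp continuous_snd)

/-! ### The Cantor set -/

/-- The Cantor set `{0,1}^ℕ`. -/
abbrev Cantor : Type := ℕ → Bool

/-- Prepending a finite word to an element of the Cantor set. -/
def wordAppend (w : List Bool) (ξ : Cantor) : Cantor :=
  fun n => if h : n < w.length then w[n] else ξ (n - w.length)

/-- A dyadic partition set: a finite set of binary words whose cylinders partition
the Cantor set. -/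
def IsDyadicPartition (A : Finset (List Bool)) : Prop :=
  ∀ ξ : Cantor, ∃! w : List Bool, w ∈ A ∧ ∃ ξ' : Cantor, wordAppend w ξ' = ξ

/-- The defining condition for elements of Thompson's group `V`: a homeomorphism of the
Cantor set given by prefix replacement along a bijection of two dyadic partition sets. -/
def IsThompsonVMap (γ : Cantor ≃ₜ Cantor) : Prop :=
  ∃ (A B : Finset (List Bool)) (f : List Bool → List Bool),
    IsDyadicPartition A ∧ IsDyadicPartition B ∧ A.card = B.card ∧ Set.BijOn f A B ∧
    ∀ w ∈ A, ∀ ξ : Cantor, γ (wordAppend w ξ) = wordAppend (f w) ξ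

/-- Thompson's group `V`, as a group of homeomorphisms of the Cantor set. -/
def ThompsonV : Subgroup (Cantor ≃ₜ Cantor) :=
  Subgroup.closure {γ | IsThompsonVMap γ}

theorem cantor_core_continuous (G : ℕ → Bool → Bool → Bool → Bool → Bool → Bool → Bool) :
    Continuous (fun ξ : Cantor =>
      (fun n => G n (ξ 0) (ξ 1) (ξ 2) (ξ (n - 1)) (ξ n) (ξ (n + 1)) : Cantor)) := by
  apply continuous_pi
  intro n
  have h : Continuous (fun ξ : Cantor =>
      ((ξ 0, ξ 1, ξ 2, ξ (n - 1), ξ n, ξ (n + 1)) : Bool × Bool × Bool × Bool × Bool × Bool)) :=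
    (continuous_apply 0).prodMk ((continuous_apply 1).prodMk
      ((continuous_apply 2).prodMk ((continuous_apply (n-1)).prodMk
      ((continuous_apply n).prodMk (continuous_apply (n+1))))))
  exact (continuous_of_discreteTopology
    (f := fun p : Bool × Bool × Bool × Bool × Bool × Bool =>
      G n p.1 p.2.1 p.2.2.1 p.2.2.2.1 p.2.2.2.2.1 p.2.2.2.2.2)).comp h

def consC (b : Bool) (ξ : Cantor) : Cantor := fun n => match n with
  | 0 => b
  | n+1 => ξ n

def shiftC (ξ : Cantor) : Cantor := fun n => ξ (n + 1)

theorem consC_continuous (b : Bool) : Continuous (consC b) := by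
  apply continuous_pi
  intro n
  match n with
  | 0 => exact continuous_const
  | n+1 => exact continuous_apply n

theorem shiftC_continuous : Continuous shiftC :=
  continuous_pi fun n => continuous_apply (n + 1)

/-! ### Thompson's generator `X₀` as a homeomorphism of the Cantor set -/

def x0core (n : ℕ) (b0 b1 : Bool) (w v u : Bool) : Bool :=
  if b0 = false then
    (if b1 = false then u
     else if n = 0 then true else if n = 1 then false else v)
  else (if n ≤ 1 then true else w)

def x0invcore (n : ℕ) (b0 b1 : Bool) (w v u : Bool) : Bool :=
  if b0 = false then (if n ≤ 1 then false else w)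
  else if b1 = false then (if n = 0 then false else if n = 1 then true else v)
  else (if n = 0 then true else u)

/-- `X₀ : 00ξ ↦ 0ξ`, `01ξ ↦ 10ξ`, `1ξ ↦ 11ξ`. -/
def x0fun (ξ : Cantor) : Cantor := fun n => x0core n (ξ 0) (ξ 1) (ξ (n - 1)) (ξ n) (ξ (n + 1))

def x0inv (ξ : Cantor) : Cantor := fun n => x0invcore n (ξ 0) (ξ 1) (ξ (n - 1)) (ξ n) (ξ (n + 1))

theorem x0_left_inv : Function.LeftInverse x0inv x0fun := by
  intro ξ
  funext n
  rcases hb0 : ξ 0 with _ | _ <;> rcases hb1 : ξ 1 with _ | _ <;>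
    rcases n with _ | _ | n <;>
    simp [x0fun, x0inv, x0core, x0invcore, hb0, hb1]

theorem x0_right_inv : Function.RightInverse x0inv x0fun := by
  intro ξ
  funext n
  rcases hb0 : ξ 0 with _ | _ <;> rcases hb1 : ξ 1 with _ | _ <;>
    rcases n with _ | _ | n <;>
    simp [x0fun, x0inv, x0core, x0invcore, hb0, hb1]

/-- Thompson's generator `X₀` as a homeomorphism of the Cantor set. -/
def X0c : Cantor ≃ₜ Cantor where
  toEquiv := ⟨x0fun, x0inv, x0_left_inv, x0_right_inv⟩
  continuous_toFun := cantor_core_continuous fun n b0 b1 _ w v u => x0core n b0 b1 w v u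
  continuous_invFun := cantor_core_continuous fun n b0 b1 _ w v u => x0invcore n b0 b1 w v u

/-- The homeomorphism `Cantor ≃ₜ Cantor × Bool` splitting off the first letter. -/
def splitHomeo : Cantor ≃ₜ Cantor × Bool where
  toEquiv := ⟨fun ξ => (shiftC ξ, ξ 0), fun p => consC p.2 p.1,
    fun ξ => by funext n; rcases n with _ | n <;> rfl,
    fun p => by
      refine Prod.ext ?_ rfl
      funext n; rfl⟩
  continuous_toFun := shiftC_continuous.prodMk (continuous_apply 0)
  continuous_invFun := by
    apply continuous_pi
    intro n
    match n with
    | 0 => exact continuous_snd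
    | n+1 => exact (continuous_apply n).comp continuous_fst

/-- Thompson's generator `X₁ = 1X₀`: the copy of `X₀` supported on the cylinder `1C`. -/
def X1c : Cantor ≃ₜ Cantor :=
  splitHomeo.trans ((fiberedHomeo fun b =>
    if b = true then X0c else Homeomorph.refl Cantor).trans splitHomeo.symm)

end

noncomputable section

/-! ### The Grigorchuk generators -/

namespace Grig

def aFun : List Bool → List Bool
  | [] => []
  | x :: w => (!x) :: w

mutual
  def bFun : List Bool → List Bool
    | [] => []
    | false :: w => false :: aFun w
    | true :: w => true :: cFun w
  def cFun : List Bool → List Bool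
    | [] => []
    | false :: w => false :: aFun w
    | true :: w => true :: dFun w
  def dFun : List Bool → List Bool
    | [] => []
    | false :: w => false :: w
    | true :: w => true :: bFun w
end

theorem aFun_involutive : Function.Involutive aFun := by
  intro w
  match w with
  | [] => rfl
  | x :: w => simp [aFun]

theorem bcd_involutive :
    ∀ w : List Bool, bFun (bFun w) = w ∧ cFun (cFun w) = w ∧ dFun (dFun w) = w := by
  intro w
  induction w with
  | nil => exact ⟨rfl, rfl, rfl⟩
  | cons x w ih =>
    rcases x with _ | _
    · simp [bFun, cFun, dFun, aFun_involutive w]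
    · simp [bFun, cFun, dFun, ih.1, ih.2.1, ih.2.2]

theorem bFun_involutive : Function.Involutive bFun := fun w => (bcd_involutive w).1
theorem cFun_involutive : Function.Involutive cFun := fun w => (bcd_involutive w).2.1
theorem dFun_involutive : Function.Involutive dFun := fun w => (bcd_involutive w).2.2

theorem aFun_length : ∀ w : List Bool, (aFun w).length = w.length := by
  intro w
  match w with
  | [] => rfl
  | x :: w => simp [aFun]

theorem bcd_length : ∀ w : List Bool,
    (bFun w).length = w.length ∧ (cFun w).length = w.length ∧ (dFun w).length = w.length := by
  intro w
  induction w with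
  | nil => exact ⟨rfl, rfl, rfl⟩
  | cons x w ih =>
    rcases x with _ | _
    · simp [bFun, cFun, dFun, aFun_length w]
    · simp [bFun, cFun, dFun, ih.1, ih.2.1, ih.2.2]

theorem bFun_length : ∀ w, (bFun w).length = w.length := fun w => (bcd_length w).1
theorem cFun_length : ∀ w, (cFun w).length = w.length := fun w => (bcd_length w).2.1
theorem dFun_length : ∀ w, (dFun w).length = w.length := fun w => (bcd_length w).2.2

/-- The generators of the first Grigorchuk group as permutations of the vertex set
`{0,1}*` of the rooted binary tree. -/
def aPerm : Equiv.Perm (List Bool) := aFun_involutive.toPerm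
def bPerm : Equiv.Perm (List Bool) := bFun_involutive.toPerm
def cPerm : Equiv.Perm (List Bool) := cFun_involutive.toPerm
def dPerm : Equiv.Perm (List Bool) := dFun_involutive.toPerm

/-- The generating set `S = {a, b, c, d}` (a set of involutions). -/
def Sset : Set (Equiv.Perm (List Bool)) := {aPerm, bPerm, cPerm, dPerm}

/-- The first Grigorchuk group. -/
def Grigorchuk : Subgroup (Equiv.Perm (List Bool)) := Subgroup.closure Sset

/-- Word length with respect to `S = {a, b, c, d}`. -/
def wordLength (g : Equiv.Perm (List Bool)) : ℕ :=
  sInf {k | ∃ l : List (Equiv.Perm (List Bool)),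
    (∀ x ∈ l, x ∈ Sset) ∧ l.length = k ∧ l.prod = g}

/-- The growth function of the first Grigorchuk group with respect to `S`. -/
def growthGrig (m : ℕ) : ℕ :=
  Nat.card {g : Equiv.Perm (List Bool) |
    ∃ l : List (Equiv.Perm (List Bool)), (∀ x ∈ l, x ∈ Sset) ∧ l.length ≤ m ∧ l.prod = g}

/-! ### Level transfer -/

def levelFun (n : ℕ) (f : List Bool → List Bool) (v : Fin n → Bool) : Fin n → Bool :=
  fun i => (f (List.ofFn v)).getD i false

theorem levelFun_involutive (n : ℕ) (f : List Bool → List Bool)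
    (hlen : ∀ l, (f l).length = l.length) (hinv : Function.Involutive f) :
    Function.Involutive (levelFun n f) := by
  intro v
  have key : ∀ u : Fin n → Bool, List.ofFn (levelFun n f u) = f (List.ofFn u) := by
    intro u
    apply List.ext_getElem
    · simp [hlen]
    · intro i h1 h2
      simp only [List.getElem_ofFn]
      simp [levelFun, List.getD_eq_getElem, h2]
  funext i
  simp only [levelFun, key v, hinv (List.ofFn v)]
  simp [List.getD_eq_getElem]

/-- The images `a_n, b_n, c_n, d_n` of the Grigorchuk generators in `Sym(X_n)`,
where the `n`-th level `X_n = {0,1}^n` is identified with `Fin n → Bool`. -/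
def aLev (n : ℕ) : Equiv.Perm (Fin n → Bool) :=
  (levelFun_involutive n aFun aFun_length aFun_involutive).toPerm
def bLev (n : ℕ) : Equiv.Perm (Fin n → Bool) :=
  (levelFun_involutive n bFun bFun_length bFun_involutive).toPerm
def cLev (n : ℕ) : Equiv.Perm (Fin n → Bool) :=
  (levelFun_involutive n cFun cFun_length cFun_involutive).toPerm
def dLev (n : ℕ) : Equiv.Perm (Fin n → Bool) :=
  (levelFun_involutive n dFun dFun_length dFun_involutive).toPerm

end Grig

/-! ### The space `C_{Y_n}` and the generating set `T_n` -/

namespace TV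

/-- The `n`-th level `X_n = {0,1}^n` of the binary tree. -/
abbrev XL (n : ℕ) : Type := Fin n → Bool

/-- `C_{Y_n} = C × Y_n` with `Y_n = X_n × {1,2,3,4}`; the sheets are indexed by `Fin 4`. -/
abbrev Mn (n : ℕ) : Type := Cantor × (XL n × Fin 4)

/-- `ρ_n = 1^n`. -/
def rhoL (n : ℕ) : XL n := fun _ => true
/-- `η_n = 1^{n-1}0`. -/
def etaL (n : ℕ) : XL n := fun i => decide ((i : ℕ) < n - 1)
/-- `θ_n = 01^{n-1}`. -/
def thetaL (n : ℕ) : XL n := fun i => decide (0 < (i : ℕ))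

/-- A type 1 generator: an element of `S_n` acting diagonally on the four sheets. -/
def type1Gen (n : ℕ) (s : Equiv.Perm (XL n)) : Mn n ≃ₜ Mn n :=
  basePermHomeo (s.prodCongr (Equiv.refl (Fin 4)))

/-- The set of type 1 generators (the truncated Grigorchuk generators). -/
def Type1Set (n : ℕ) : Set (Mn n ≃ₜ Mn n) :=
  {type1Gen n (Grig.aLev n), type1Gen n (Grig.bLev n),
   type1Gen n (Grig.cLev n), type1Gen n (Grig.dLev n)}

/-- A type 2 generator: an element of `Sym(4)_{η_n}`. -/
def type2Gen (n : ℕ) (π : Equiv.Perm (Fin 4)) : Mn n ≃ₜ Mn n :=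
  basePermHomeo (Equiv.prodCongrRight fun x : XL n =>
    if x = etaL n then π else Equiv.refl (Fin 4))

/-- The copy `Sym(4)_{η_n}` of the symmetric group over `η_n` (type 2 generators). -/
def Type2Set (n : ℕ) : Set (Mn n ≃ₜ Mn n) := Set.range (type2Gen n)

/-- The linking transposition `τ_n` (type 3), exchanging the first sheets over
`ρ_n` and `θ_n`. -/
def tauN (n : ℕ) : Mn n ≃ₜ Mn n :=
  basePermHomeo (Equiv.swap (rhoL n, (0 : Fin 4)) (thetaL n, (0 : Fin 4)))

/-- `X₁^{(n)}`: the copy of `X₀` supported on the fourth sheet over `ρ_n` (type 4). -/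
def X1n (n : ℕ) : Mn n ≃ₜ Mn n :=
  fiberedHomeo fun y : XL n × Fin 4 =>
    if y = (rhoL n, (3 : Fin 4)) then X0c else Homeomorph.refl Cantor

/-! The homeomorphism of `C × {1,2,3,4}` acting as `X₀` on `D = C_2 ⊔ C_3` (sheets `1`, `2`
in the `Fin 4` indexing) under the identification `(ξ, i) ↦ (i-2)ξ`, and trivial elsewhere. -/

def x0dSheet (i : Fin 4) (b0 : Bool) : Fin 4 :=
  if i = 1 then (if b0 = false then 1 else 2) else i

def x0dCore (i : Fin 4) (n : ℕ) (b0 w v u : Bool) : Bool :=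
  if i = 1 then (if b0 = false then u else if n = 0 then false else v)
  else if i = 2 then (if n = 0 then true else w)
  else v

def x0dSheetInv (i : Fin 4) (b0 : Bool) : Fin 4 :=
  if i = 2 then (if b0 = false then 1 else 2) else i

def x0dCoreInv (i : Fin 4) (n : ℕ) (b0 w v u : Bool) : Bool :=
  if i = 1 then (if n = 0 then false else w)
  else if i = 2 then (if b0 = false then (if n = 0 then true else v) else u)
  else v

def x0dFun (p : Cantor × Fin 4) : Cantor × Fin 4 :=
  ((fun n => x0dCore p.2 n (p.1 0) (p.1 (n - 1)) (p.1 n) (p.1 (n + 1))),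
    x0dSheet p.2 (p.1 0))

def x0dInvFun (p : Cantor × Fin 4) : Cantor × Fin 4 :=
  ((fun n => x0dCoreInv p.2 n (p.1 0) (p.1 (n - 1)) (p.1 n) (p.1 (n + 1))),
    x0dSheetInv p.2 (p.1 0))

theorem x0d_left_inv : Function.LeftInverse x0dInvFun x0dFun := by
  rintro ⟨ξ, i⟩
  rcases hb0 : ξ 0 with _ | _ <;> fin_cases i <;>
    refine Prod.ext (funext fun n => ?_) ?_ <;>
    first
      | (rcases n with _ | n <;>
          simp [x0dFun, x0dInvFun, x0dCore, x0dCoreInv, x0dSheet, x0dSheetInv, hb0])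
      | simp [x0dFun, x0dInvFun, x0dCore, x0dCoreInv, x0dSheet, x0dSheetInv, hb0]

theorem x0d_right_inv : Function.RightInverse x0dInvFun x0dFun := by
  rintro ⟨ξ, i⟩
  rcases hb0 : ξ 0 with _ | _ <;> fin_cases i <;>
    refine Prod.ext (funext fun n => ?_) ?_ <;>
    first
      | (rcases n with _ | n <;>
          simp [x0dFun, x0dInvFun, x0dCore, x0dCoreInv, x0dSheet, x0dSheetInv, hb0])
      | simp [x0dFun, x0dInvFun, x0dCore, x0dCoreInv, x0dSheet, x0dSheetInv, hb0]

theorem x0dFun_continuous : Continuous x0dFun := by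
  have h : Continuous fun p : Cantor × Fin 4 => x0dFun (p.1, p.2) := by
    refine cont_fibered (Z := Cantor × Fin 4) (fun ξ i => x0dFun (ξ, i)) fun i => ?_
    refine Continuous.prodMk ?_ ?_
    · exact cantor_core_continuous fun n b0 _ _ w v u => x0dCore i n b0 w v u
    · exact Continuous.comp
        (continuous_of_discreteTopology (α := Bool) (f := x0dSheet i)) (continuous_apply 0)
  simpa using h

theorem x0dInvFun_continuous : Continuous x0dInvFun := by
  have h : Continuous fun p : Cantor × Fin 4 => x0dInvFun (p.1, p.2) := by
    refine cont_fibered (Z := Cantor × Fin 4) (fun ξ i => x0dInvFun (ξ, i)) fun i => ?_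
    refine Continuous.prodMk ?_ ?_
    · exact cantor_core_continuous fun n b0 _ _ w v u => x0dCoreInv i n b0 w v u
    · exact Continuous.comp
        (continuous_of_discreteTopology (α := Bool) (f := x0dSheetInv i)) (continuous_apply 0)
  simpa using h

def X0D : (Cantor × Fin 4) ≃ₜ (Cantor × Fin 4) where
  toEquiv := ⟨x0dFun, x0dInvFun, x0d_left_inv, x0d_right_inv⟩
  continuous_toFun := x0dFun_continuous
  continuous_invFun := x0dInvFun_continuous

/-- Reshuffling `C × (X_n × {1,…,4}) ≃ₜ (C × {1,…,4}) × X_n`. -/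
def reshuffle (n : ℕ) : Mn n ≃ₜ (Cantor × Fin 4) × XL n :=
  ((Homeomorph.refl Cantor).prodCongr (Homeomorph.prodComm (XL n) (Fin 4))).trans
    (Homeomorph.prodAssoc Cantor (Fin 4) (XL n)).symm

/-- `X₀^{(n)}`: acting as `X₀` on `D_n = C_{(ρ_n,2)} ⊔ C_{(ρ_n,3)}` (type 4). -/
def X0n (n : ℕ) : Mn n ≃ₜ Mn n :=
  (reshuffle n).trans ((fiberedHomeo fun x : XL n =>
    if x = rhoL n then X0D else Homeomorph.refl (Cantor × Fin 4)).trans (reshuffle n).symm)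

/-- The type 4 generators. -/
def Type4Set (n : ℕ) : Set (Mn n ≃ₜ Mn n) := {X0n n, X1n n}

/-- The generating set `T_n`. -/
def TnSet (n : ℕ) : Set (Mn n ≃ₜ Mn n) :=
  Type1Set n ∪ Type2Set n ∪ {tauN n} ∪ Type4Set n

/-- The group `W_n = ⟨T_n⟩`. -/
def Wn (n : ℕ) : Subgroup (Mn n ≃ₜ Mn n) := Subgroup.closure (TnSet n)

/-- The generators of types `2`, `3` and `4`. -/
def typeSet (n : ℕ) : ℕ → Set (Mn n ≃ₜ Mn n)
  | 2 => Type2Set n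
  | 3 => {tauN n}
  | 4 => Type4Set n
  | _ => ∅

end TV

end
/-! ### The boundary action and actions of words -/

/-- The (continuous extension to the boundary `∂T = {0,1}^ℕ` of the) action of a tree
automorphism on the boundary of the rooted binary tree. -/
def boundaryAct (g : Equiv.Perm (List Bool)) (ξ : ℕ → Bool) : ℕ → Bool :=
  fun n => (g (List.ofFn fun i : Fin (n + 1) => ξ i)).getD n false

/-- Applying a word of generators to a vertex, letter by letter: the right action of the
word `l` (the generators in `S` are involutions). -/
def wordApply (l : List (Equiv.Perm (List Bool))) (v : List Bool) : List Bool :=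
  l.foldl (fun v s => s v) v

/-- The right action of a word on a boundary point. -/
def wordApplyB (l : List (Equiv.Perm (List Bool))) (ξ : ℕ → Bool) : ℕ → Bool :=
  l.foldl (fun ξ s => boundaryAct s ξ) ξ

/-- The boundary point `ρ = 1^∞`. -/
def rhoInf : ℕ → Bool := fun _ => true

/-- The vertex `ρ_n = 1^n` of the `n`-th level. -/
def rhoVertex (n : ℕ) : List Bool := List.replicate n true

/-- The vertex `η_n = 1^{n-1}0` of the `n`-th level. -/
def etaVertex (n : ℕ) : List Bool := List.replicate (n - 1) true ++ [false]
/-! ### Inverted orbits of the Grigorchuk group on the orbit of `ρ = 1^∞` -/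

/-- The inverted orbit `O_ξ(l) = {ξ, ξ·s_ℓ, ξ·s_{ℓ-1}s_ℓ, …, ξ·s_1⋯s_ℓ}` of the word
`l = s_1 ⋯ s_ℓ` at the boundary point `ξ`. -/
def invOrbitB (l : List (Equiv.Perm (List Bool))) (ξ : ℕ → Bool) : Set (ℕ → Bool) :=
  {x | ∃ i : ℕ, x = wordApplyB (l.drop i) ξ}

/-- The inverted orbit growth function `Δ_ρ^S` of the Grigorchuk group acting on the
orbit of `ρ = 1^∞`. -/
noncomputable def DeltaB (m : ℕ) : ℕ :=
  sSup {k | ∃ l : List (Equiv.Perm (List Bool)),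
    (∀ x ∈ l, x ∈ Grig.Sset) ∧ l.length ≤ m ∧ k = Nat.card (invOrbitB l rhoInf)}

/-- The number `N_ρ^S(m)` of distinct inverted orbits of words of length at most `m`. -/
noncomputable def NorbB (m : ℕ) : ℕ :=
  Nat.card {O : Set (ℕ → Bool) | ∃ l : List (Equiv.Perm (List Bool)),
    (∀ x ∈ l, x ∈ Grig.Sset) ∧ l.length ≤ m ∧ O = invOrbitB l rhoInf}

noncomputable section

open Classical in
/-- The `S_n ∪ {1}`-part of a letter of `T_n` (as in the normal form). -/
noncomputable def gpart (n : ℕ) (t : TV.Mn n ≃ₜ TV.Mn n) : TV.Mn n ≃ₜ TV.Mn n :=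
  if t ∈ TV.Type1Set n then t else 1

open Classical in
/-- The type-`j` part of a letter of `T_n` (as in the normal form), `j ∈ {2,3,4}`. -/
noncomputable def apart (n j : ℕ) (t : TV.Mn n ≃ₜ TV.Mn n) : TV.Mn n ≃ₜ TV.Mn n :=
  if t ∈ TV.typeSet n j then t else 1

/-- The first factor `p₁` of the normal form of the word `w` over `T_n`. -/
noncomputable def p1fac (n : ℕ) (w : List (TV.Mn n ≃ₜ TV.Mn n)) : TV.Mn n ≃ₜ TV.Mn n :=
  (w.map (gpart n)).prod

/-- The factor `p_j` (`j ∈ {2,3,4}`) of the normal form of the word `w = t_1 ⋯ t_ℓ` over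
`T_n`: the product `(a_1^{(j)})^{g_1 ⋯ g_ℓ} (a_2^{(j)})^{g_2 ⋯ g_ℓ} ⋯ (a_ℓ^{(j)})^{g_ℓ}`
of conjugates (`x^h = h⁻¹xh`), where `g_i` and `a_i^{(j)}` are the type-1 part and the
type-`j` part of the letter `t_i`. -/
noncomputable def pjfac (n j : ℕ) (w : List (TV.Mn n ≃ₜ TV.Mn n)) : TV.Mn n ≃ₜ TV.Mn n :=
  (List.ofFn fun i : Fin w.length =>
    (((w.map (gpart n)).drop (i : ℕ)).prod)⁻¹ * apart n j (w.get i) *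
      ((w.map (gpart n)).drop (i : ℕ)).prod).prod

/-- The set `P_1(ℓ)`: all elements occurring as the first factor of the normal form of
some word over `T_n` of length at most `ℓ`. -/
def P1set (n ℓ : ℕ) : Set (TV.Mn n ≃ₜ TV.Mn n) :=
  {p | ∃ w : List (TV.Mn n ≃ₜ TV.Mn n),
    (∀ t ∈ w, t ∈ TV.TnSet n) ∧ w.length ≤ ℓ ∧ p = p1fac n w}

/-- The set `P_j(ℓ)`: all elements occurring as the `j`-th factor of the normal form of
some word over `T_n` of length at most `ℓ`. -/
def Pjset (n j ℓ : ℕ) : Set (TV.Mn n ≃ₜ TV.Mn n) :=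
  {p | ∃ w : List (TV.Mn n ≃ₜ TV.Mn n),
    (∀ t ∈ w, t ∈ TV.TnSet n) ∧ w.length ≤ ℓ ∧ p = pjfac n j w}

end


/-! In the normal form, `p₃` is a product of conjugates `h⁻¹ τ_n h`, where `h` runs over suffix
products of the type-1 letters; `h` acts on the level as a word `l` of length `≤ ℓ` in
`a, b, c, d`. Each conjugate is the transposition of the first sheets over `ρ_n·l'` and
`θ_n·l'` for a suffix `l'` of `l`, so it lies in the level-`n` trace of `O_ρ(l) ∪ O_θ(l)`.
Since `θ = aρ`, the orbit `O_θ(l)` is the `a`-translate of `O_ρ` of the letterwise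
`a`-conjugate of `l`, a word of length `≤ 3ℓ`. Hence `p₃` is a permutation of at most
`K = Δ(ℓ) + Δ(3ℓ)` points determined by two inverted orbits at `ρ`, and
`|P₃(ℓ)| ≤ N(ℓ) N(3ℓ) K!`, which the hypotheses bound by `exp (C₃ ℓ^α log ℓ)`. -/

open Equiv
open scoped Nat

namespace Grig

theorem aFun_take (w : List Bool) (k : ℕ) : aFun (w.take k) = (aFun w).take k := by
  rcases w with _ | ⟨x, w⟩ <;> rcases k with _ | k <;> rfl

theorem bcd_take (w : List Bool) (k : ℕ) :
    bFun (w.take k) = (bFun w).take k ∧ cFun (w.take k) = (cFun w).take k ∧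
      dFun (w.take k) = (dFun w).take k := by
  induction w generalizing k with
  | nil => simp [bFun, cFun, dFun]
  | cons x w ih =>
    rcases k with _ | k
    · rcases x with _ | _ <;> simp [bFun, cFun, dFun]
    · rcases x with _ | _
      · simp [bFun, cFun, dFun, aFun_take]
      · simp [bFun, cFun, dFun, (ih k).1, (ih k).2.1, (ih k).2.2]

theorem Sset_finite : Sset.Finite := by
  unfold Sset
  exact Set.toFinite _

end Grig

def levelTrunc (n : ℕ) (ξ : ℕ → Bool) : TV.XL n := fun i => ξ i

theorem levelFun_levelTrunc {f : List Bool → List Bool}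
    (hf : ∀ w k, f (w.take k) = (f w).take k) {P : Perm (List Bool)} (hP : ⇑P = f)
    (n : ℕ) (ξ : ℕ → Bool) :
    Grig.levelFun n f (levelTrunc n ξ) = levelTrunc n (boundaryAct P ξ) := by
  funext i
  have hpre : (List.ofFn fun j : Fin (i + 1) => ξ j) =
      (List.ofFn (levelTrunc n ξ)).take (i + 1) :=
    Fin.ofFn_take_eq_take_ofFn i.isLt (levelTrunc n ξ)
  simp only [Grig.levelFun, levelTrunc, boundaryAct, hP, hpre, hf, List.getD_eq_getElem?_getD,
    List.getElem?_take_of_lt (Nat.lt_succ_self _)]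

theorem levelFun_toPerm_inv_levelTrunc {f : List Bool → List Bool}
    (hlen : ∀ w, (f w).length = w.length) (hinv : Function.Involutive f)
    (hf : ∀ w k, f (w.take k) = (f w).take k) (n : ℕ) (ξ : ℕ → Bool) :
    (Grig.levelFun_involutive n f hlen hinv).toPerm⁻¹ (levelTrunc n ξ) =
      levelTrunc n (boundaryAct (hinv.toPerm f) ξ) :=
  levelFun_levelTrunc hf (Function.Involutive.coe_toPerm _) n ξ

theorem exists_of_mem_Type1Set {n : ℕ} {t : TV.Mn n ≃ₜ TV.Mn n} (ht : t ∈ TV.Type1Set n) :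
    ∃ s : Perm (TV.XL n), ∃ P ∈ Grig.Sset, t = TV.type1Gen n s ∧
      ∀ ξ, s⁻¹ (levelTrunc n ξ) = levelTrunc n (boundaryAct P ξ) := by
  rcases ht with rfl | rfl | rfl | rfl
  · exact ⟨_, _, Or.inl rfl, rfl,
      levelFun_toPerm_inv_levelTrunc Grig.aFun_length Grig.aFun_involutive Grig.aFun_take n⟩
  · exact ⟨_, _, Or.inr (Or.inl rfl), rfl,
      levelFun_toPerm_inv_levelTrunc Grig.bFun_length Grig.bFun_involutive
        (fun w k => (Grig.bcd_take w k).1) n⟩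
  · exact ⟨_, _, Or.inr (Or.inr (Or.inl rfl)), rfl,
      levelFun_toPerm_inv_levelTrunc Grig.cFun_length Grig.cFun_involutive
        (fun w k => (Grig.bcd_take w k).2.1) n⟩
  · exact ⟨_, _, Or.inr (Or.inr (Or.inr rfl)), rfl,
      levelFun_toPerm_inv_levelTrunc Grig.dFun_length Grig.dFun_involutive
        (fun w k => (Grig.bcd_take w k).2.2) n⟩

theorem boundaryAct_aPerm (ξ : ℕ → Bool) :
    boundaryAct Grig.aPerm ξ = fun m => if m = 0 then !ξ 0 else ξ m := by
  funext m
  rcases m with _ | m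
  · rfl
  · rw [boundaryAct, List.ofFn_succ]
    simp only [Grig.aPerm, Function.Involutive.coe_toPerm, Grig.aFun, List.getD_cons_succ]
    rw [List.getD_eq_getElem?_getD, List.getElem?_ofFn]
    simp

theorem boundaryAct_aPerm_involutive : Function.Involutive (boundaryAct Grig.aPerm) := by
  intro ξ
  funext m
  by_cases hm : m = 0 <;> simp [boundaryAct_aPerm, hm]

theorem levelTrunc_rhoInf (n : ℕ) : levelTrunc n rhoInf = TV.rhoL n := rfl

theorem levelTrunc_aPerm_rhoInf (n : ℕ) :
    levelTrunc n (boundaryAct Grig.aPerm rhoInf) = TV.thetaL n := by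
  funext i
  by_cases hi : (i : ℕ) = 0 <;> simp [levelTrunc, boundaryAct_aPerm, rhoInf, TV.thetaL, hi,
    Nat.pos_iff_ne_zero]

def aConjWord (l : List (Perm (List Bool))) : List (Perm (List Bool)) :=
  l.flatMap fun P => [Grig.aPerm, P, Grig.aPerm]

theorem aConjWord_length (l : List (Perm (List Bool))) :
    (aConjWord l).length = 3 * l.length := by
  simp [aConjWord, List.length_flatMap, mul_comm]

theorem aConjWord_mem_Sset {l : List (Perm (List Bool))} (hl : ∀ P ∈ l, P ∈ Grig.Sset) :
    ∀ Q ∈ aConjWord l, Q ∈ Grig.Sset := by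
  simp only [aConjWord, List.mem_flatMap, List.mem_cons, List.not_mem_nil, or_false]
  rintro Q ⟨P, hP, rfl | rfl | rfl⟩
  · exact Or.inl rfl
  · exact hl _ hP
  · exact Or.inl rfl

theorem aConjWord_drop (l : List (Perm (List Bool))) (j : ℕ) :
    (aConjWord l).drop (3 * j) = aConjWord (l.drop j) := by
  induction j generalizing l with
  | zero => rfl
  | succ j ih =>
    rcases l with _ | ⟨P, l⟩
    · simp [aConjWord]
    · rw [show 3 * (j + 1) = 3 * j + 3 by ring]
      exact ih l

theorem wordApplyB_cons (P : Perm (List Bool)) (l : List (Perm (List Bool))) (ξ : ℕ → Bool) :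
    wordApplyB (P :: l) ξ = wordApplyB l (boundaryAct P ξ) := rfl

theorem wordApplyB_aConjWord (l : List (Perm (List Bool))) (ξ : ℕ → Bool) :
    wordApplyB (aConjWord l) ξ =
      boundaryAct Grig.aPerm (wordApplyB l (boundaryAct Grig.aPerm ξ)) := by
  induction l generalizing ξ with
  | nil => exact (boundaryAct_aPerm_involutive ξ).symm
  | cons P l ih =>
    change wordApplyB (aConjWord l) _ = _
    rw [ih, boundaryAct_aPerm_involutive, wordApplyB_cons]

/-- `E⁻¹` rather than `E`: products in `X ≃ₜ X` compose right to left, while `wordApplyB`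
applies the letters of `l` left to right. -/
def ActsAsWordOnLevel (n : ℕ) (g : TV.Mn n ≃ₜ TV.Mn n) (l : List (Perm (List Bool))) : Prop :=
  ∃ E : Perm (TV.XL n), g = TV.type1Gen n E ∧
    ∀ ξ, E⁻¹ (levelTrunc n ξ) = levelTrunc n (wordApplyB l ξ)

theorem actsAsWordOnLevel_one (n : ℕ) : ActsAsWordOnLevel n 1 [] :=
  ⟨1, Homeomorph.ext fun _ => rfl, fun _ => rfl⟩

theorem ActsAsWordOnLevel.type1Gen_mul {n : ℕ} {g : TV.Mn n ≃ₜ TV.Mn n}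
    {l : List (Perm (List Bool))} (hg : ActsAsWordOnLevel n g l) {s : Perm (TV.XL n)}
    {P : Perm (List Bool)} (hs : ∀ ξ, s⁻¹ (levelTrunc n ξ) = levelTrunc n (boundaryAct P ξ)) :
    ActsAsWordOnLevel n (TV.type1Gen n s * g) (P :: l) := by
  obtain ⟨E, rfl, hE⟩ := hg
  refine ⟨s * E, Homeomorph.ext fun _ => rfl, fun ξ => ?_⟩
  rw [mul_inv_rev, Perm.mul_apply, hs, hE, wordApplyB_cons]

theorem exists_actsAsWordOnLevel (n : ℕ) (w : List (TV.Mn n ≃ₜ TV.Mn n)) :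
    ∃ l : List (Perm (List Bool)), (∀ P ∈ l, P ∈ Grig.Sset) ∧ l.length ≤ w.length ∧
      ActsAsWordOnLevel n (w.map (gpart n)).prod l ∧
      ∀ i, ∃ j, ActsAsWordOnLevel n ((w.map (gpart n)).drop i).prod (l.drop j) := by
  induction w with
  | nil =>
    exact ⟨[], by simp, le_rfl, actsAsWordOnLevel_one n,
      fun _ => ⟨0, by simpa using actsAsWordOnLevel_one n⟩⟩
  | cons t w ih =>
    obtain ⟨l, hl, hlen, hprod, hsuffix⟩ := ih
    by_cases ht : t ∈ TV.Type1Set n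
    · obtain ⟨s, P, hP, rfl, hs⟩ := exists_of_mem_Type1Set ht
      have hprod' :
          ActsAsWordOnLevel n ((TV.type1Gen n s :: w).map (gpart n)).prod (P :: l) := by
        rw [List.map_cons, List.prod_cons, gpart, if_pos ht]
        exact hprod.type1Gen_mul hs
      refine ⟨P :: l, ?_, by simpa using hlen, hprod', ?_⟩
      · simpa [hP] using hl
      · rintro (_ | i)
        · exact ⟨0, hprod'⟩
        · obtain ⟨j, hj⟩ := hsuffix i
          exact ⟨j + 1, hj⟩
    · have hprod' : ActsAsWordOnLevel n ((t :: w).map (gpart n)).prod l := by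
        rw [List.map_cons, List.prod_cons, gpart, if_neg ht, one_mul]
        exact hprod
      refine ⟨l, hl, hlen.trans (by simp), hprod', ?_⟩
      rintro (_ | i)
      · exact ⟨0, hprod'⟩
      · exact hsuffix i

def basePermHom (X Y : Type*) [TopologicalSpace X] [TopologicalSpace Y] [DiscreteTopology Y] :
    Perm Y →* ((X × Y) ≃ₜ (X × Y)) where
  toFun := basePermHomeo
  map_one' := rfl
  map_mul' _ _ := rfl

def orbitSupport (n : ℕ) (O₁ O₂ : Set (ℕ → Bool)) : Set (TV.XL n × Fin 4) :=
  (fun ζ => (levelTrunc n ζ, (0 : Fin 4))) '' (O₁ ∪ boundaryAct Grig.aPerm '' O₂)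

theorem swap_mem_fixingSubgroup_compl {β : Type*} [DecidableEq β] {S : Set β} {x y : β}
    (hx : x ∈ S) (hy : y ∈ S) : swap x y ∈ fixingSubgroup (Perm β) Sᶜ :=
  (mem_fixingSubgroup_iff (Perm β)).mpr fun _ hq =>
    swap_apply_of_ne_of_ne (fun h => hq (h ▸ hx)) (fun h => hq (h ▸ hy))

theorem ActsAsWordOnLevel.conj_apart_three_mem {n : ℕ} {g : TV.Mn n ≃ₜ TV.Mn n}
    {l : List (Perm (List Bool))} (hg : ActsAsWordOnLevel n g l) (t : TV.Mn n ≃ₜ TV.Mn n)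
    {S : Set (TV.XL n × Fin 4)} (hρ : (levelTrunc n (wordApplyB l rhoInf), 0) ∈ S)
    (hθ : (levelTrunc n (wordApplyB l (boundaryAct Grig.aPerm rhoInf)), 0) ∈ S) :
    g⁻¹ * apart n 3 t * g ∈ (fixingSubgroup (Perm (TV.XL n × Fin 4)) Sᶜ).map
      (basePermHom Cantor (TV.XL n × Fin 4)) := by
  obtain ⟨E, rfl, hE⟩ := hg
  by_cases ht : t = TV.tauN n
  · set F : Perm (TV.XL n × Fin 4) := E.prodCongr (Equiv.refl (Fin 4))
    have hconj : F⁻¹ * swap (TV.rhoL n, 0) (TV.thetaL n, 0) * F =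
        swap (F⁻¹ (TV.rhoL n, 0)) (F⁻¹ (TV.thetaL n, 0)) := by
      rw [swap_apply_apply, inv_inv]
    refine ⟨_, ?_, (congrArg (basePermHom Cantor _) hconj).symm.trans ?_⟩
    · refine swap_mem_fixingSubgroup_compl ?_ ?_
      · simpa [F, ← hE, levelTrunc_rhoInf] using hρ
      · simpa [F, ← hE, levelTrunc_aPerm_rhoInf] using hθ
    · rw [apart, if_pos (show t ∈ TV.typeSet n 3 from Set.mem_singleton_iff.mpr ht), ht,
        map_mul, map_mul, map_inv]
      rfl
  · rw [apart, if_neg (show t ∉ TV.typeSet n 3 from fun h => ht (Set.mem_singleton_iff.mp h)),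
      mul_one, inv_mul_cancel]
    exact one_mem _

theorem exists_pjfac_three_mem (n : ℕ) (w : List (TV.Mn n ≃ₜ TV.Mn n)) :
    ∃ l : List (Perm (List Bool)), (∀ P ∈ l, P ∈ Grig.Sset) ∧ l.length ≤ w.length ∧
      pjfac n 3 w ∈ (fixingSubgroup (Perm (TV.XL n × Fin 4))
        (orbitSupport n (invOrbitB l rhoInf) (invOrbitB (aConjWord l) rhoInf))ᶜ).map
          (basePermHom Cantor (TV.XL n × Fin 4)) := by
  obtain ⟨l, hl, hlen, -, hsuffix⟩ := exists_actsAsWordOnLevel n w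
  refine ⟨l, hl, hlen, Subgroup.list_prod_mem _ fun x hx => ?_⟩
  obtain ⟨i, rfl⟩ := List.mem_ofFn.mp hx
  obtain ⟨j, hj⟩ := hsuffix i
  refine hj.conj_apart_three_mem _ ⟨_, Or.inl ⟨j, rfl⟩, rfl⟩ ⟨_, Or.inr ?_, rfl⟩
  refine ⟨wordApplyB ((aConjWord l).drop (3 * j)) rhoInf, ⟨3 * j, rfl⟩, ?_⟩
  rw [aConjWord_drop, wordApplyB_aConjWord, boundaryAct_aPerm_involutive]

theorem ncard_le_mul_of_subset_iUnion {ι α : Type*} [Finite ι] {P : Set α} {T : ι → Set α}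
    {M : ℕ} (hT : ∀ i, (T i).Finite) (hP : P ⊆ ⋃ i, T i) (hM : ∀ i, (T i).ncard ≤ M) :
    P.ncard ≤ Nat.card ι * M := by
  have := Fintype.ofFinite ι
  calc P.ncard ≤ (⋃ i, T i).ncard := Set.ncard_le_ncard hP (Set.finite_iUnion hT)
    _ ≤ ∑ i, (T i).ncard := Set.ncard_iUnion_le_of_fintype T
    _ ≤ ∑ _i : ι, M := Finset.sum_le_sum fun i _ => hM i
    _ = Nat.card ι * M := by simp [Nat.card_eq_fintype_card]

theorem finite_setOf_forall_mem_length_le {α : Type*} {S : Set α} (hS : S.Finite) (m : ℕ) :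
    {l : List α | (∀ x ∈ l, x ∈ S) ∧ l.length ≤ m}.Finite := by
  have := hS.to_subtype
  refine ((List.finite_length_le S m).image (List.map Subtype.val)).subset ?_
  rintro l ⟨hl, hlen⟩
  obtain ⟨l', rfl⟩ : l ∈ Set.range (List.map ((↑) : S → α)) := by
    rwa [Set.range_list_map_coe]
  exact ⟨l', by simpa using hlen, rfl⟩

theorem ncard_fixingSubgroup_compl {β : Type*} {S : Set β} (hS : S.Finite) :
    (fixingSubgroup (Perm β) Sᶜ : Set (Perm β)).ncard = S.ncard ! := by
  classical
  have := hS.to_subtype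
  rw [← Nat.card_coe_set_eq, ← Nat.card_coe_set_eq, ← Nat.card_perm]
  refine Nat.card_congr ((Equiv.subtypeEquivRight fun π => ?_).trans
    (Perm.subtypeEquivSubtypePerm (· ∈ S)).symm)
  simp [mem_fixingSubgroup_iff, Perm.smul_def]

theorem finite_fixingSubgroup_compl {β : Type*} {S : Set β} (hS : S.Finite) :
    (fixingSubgroup (Perm β) Sᶜ : Set (Perm β)).Finite :=
  Set.finite_of_ncard_pos ((ncard_fixingSubgroup_compl hS).symm ▸ Nat.factorial_pos _)

theorem invOrbitB_eq_image (l : List (Perm (List Bool))) (ξ : ℕ → Bool) :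
    invOrbitB l ξ = (fun i => wordApplyB (l.drop i) ξ) '' Set.Iic l.length := by
  ext x
  constructor
  · rintro ⟨i, rfl⟩
    rcases le_total i l.length with hi | hi
    · exact ⟨i, hi, rfl⟩
    · exact ⟨l.length, Set.mem_Iic.mpr le_rfl, by simp [List.drop_eq_nil_of_le hi]⟩
  · rintro ⟨i, -, rfl⟩
    exact ⟨i, rfl⟩

theorem invOrbitB_finite (l : List (Perm (List Bool))) (ξ : ℕ → Bool) :
    (invOrbitB l ξ).Finite := by
  rw [invOrbitB_eq_image]
  exact (Set.finite_Iic _).image _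

theorem ncard_invOrbitB_le (l : List (Perm (List Bool))) (ξ : ℕ → Bool) :
    (invOrbitB l ξ).ncard ≤ l.length + 1 := by
  rw [invOrbitB_eq_image]
  refine (Set.ncard_image_le (Set.finite_Iic _)).trans_eq ?_
  simp

theorem ncard_invOrbitB_le_DeltaB {m : ℕ} {l : List (Perm (List Bool))}
    (hl : ∀ P ∈ l, P ∈ Grig.Sset) (hlen : l.length ≤ m) :
    (invOrbitB l rhoInf).ncard ≤ DeltaB m := by
  refine le_csSup ⟨m + 1, ?_⟩ ⟨l, hl, hlen, (Nat.card_coe_set_eq _).symm⟩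
  rintro k ⟨l', -, hlen', rfl⟩
  rw [Nat.card_coe_set_eq]
  exact (ncard_invOrbitB_le l' rhoInf).trans (by omega)

def orbitFamily (m : ℕ) : Set (Set (ℕ → Bool)) :=
  {O | ∃ l : List (Perm (List Bool)),
    (∀ x ∈ l, x ∈ Grig.Sset) ∧ l.length ≤ m ∧ O = invOrbitB l rhoInf}

theorem orbitFamily_finite (m : ℕ) : (orbitFamily m).Finite := by
  refine ((finite_setOf_forall_mem_length_le Grig.Sset_finite m).image
    (fun l => invOrbitB l rhoInf)).subset ?_
  rintro O ⟨l, hl, hlen, rfl⟩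
  exact ⟨l, ⟨hl, hlen⟩, rfl⟩

theorem ncard_orbitSupport_le {m₁ m₂ : ℕ} (n : ℕ) {O₁ O₂ : Set (ℕ → Bool)}
    (h₁ : O₁ ∈ orbitFamily m₁) (h₂ : O₂ ∈ orbitFamily m₂) :
    (orbitSupport n O₁ O₂).ncard ≤ DeltaB m₁ + DeltaB m₂ := by
  obtain ⟨l₁, hl₁, hlen₁, rfl⟩ := h₁
  obtain ⟨l₂, hl₂, hlen₂, rfl⟩ := h₂
  calc (orbitSupport n _ _).ncard
      ≤ (invOrbitB l₁ rhoInf ∪ boundaryAct Grig.aPerm '' invOrbitB l₂ rhoInf).ncard :=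
        Set.ncard_image_le ((invOrbitB_finite _ _).union ((invOrbitB_finite _ _).image _))
    _ ≤ (invOrbitB l₁ rhoInf).ncard + (invOrbitB l₂ rhoInf).ncard := by
        refine (Set.ncard_union_le _ _).trans_eq ?_
        rw [Set.ncard_image_of_injective _ boundaryAct_aPerm_involutive.injective]
    _ ≤ DeltaB m₁ + DeltaB m₂ := by
        gcongr
        · exact ncard_invOrbitB_le_DeltaB hl₁ hlen₁
        · exact ncard_invOrbitB_le_DeltaB hl₂ hlen₂

theorem card_Pjset_three_le (n ℓ : ℕ) :
    Nat.card (Pjset n 3 ℓ) ≤ NorbB ℓ * NorbB (3 * ℓ) * (DeltaB ℓ + DeltaB (3 * ℓ))! := by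
  have := (orbitFamily_finite ℓ).to_subtype
  have := (orbitFamily_finite (3 * ℓ)).to_subtype
  let T : orbitFamily ℓ × orbitFamily (3 * ℓ) → Set (TV.Mn n ≃ₜ TV.Mn n) := fun O =>
    basePermHom Cantor (TV.XL n × Fin 4) ''
      fixingSubgroup (Perm (TV.XL n × Fin 4)) (orbitSupport n O.1 O.2)ᶜ
  have hT : ∀ O, (T O).ncard ≤ (DeltaB ℓ + DeltaB (3 * ℓ))! := fun O => by
    refine (Set.ncard_image_le (finite_fixingSubgroup_compl (Set.toFinite _))).trans ?_
    rw [ncard_fixingSubgroup_compl (Set.toFinite _)]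
    exact Nat.factorial_le (ncard_orbitSupport_le n O.1.2 O.2.2)
  have hP : Pjset n 3 ℓ ⊆ ⋃ O, T O := by
    rintro _ ⟨w, -, hw, rfl⟩
    obtain ⟨l, hl, hlen, hmem⟩ := exists_pjfac_three_mem n w
    refine Set.mem_iUnion.mpr ⟨(⟨_, l, hl, hlen.trans hw, rfl⟩,
      ⟨_, aConjWord l, aConjWord_mem_Sset hl, ?_, rfl⟩), Subgroup.mem_map.mp hmem⟩
    rw [aConjWord_length]
    omega
  change _ ≤ Nat.card (orbitFamily ℓ) * Nat.card (orbitFamily (3 * ℓ)) * _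
  rw [Nat.card_coe_set_eq, ← Nat.card_prod]
  exact ncard_le_mul_of_subset_iUnion
    (fun O => (finite_fixingSubgroup_compl (Set.toFinite _)).image _) hP hT

section
open Real

theorem mul_rpow_le_mul_rpow {x y α : ℝ} (hx : 1 ≤ x) (hy : 0 ≤ y) (hα : α ≤ 1) :
    (x * y) ^ α ≤ x * y ^ α := by
  rw [mul_rpow (by linarith) hy]
  gcongr
  calc x ^ α ≤ x ^ (1 : ℝ) := rpow_le_rpow_of_exponent_le hx hα
    _ = x := rpow_one x

theorem factorial_le_exp_mul_log (K : ℕ) : (K ! : ℝ) ≤ exp (K * log (K + 1)) := by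
  rw [exp_nat_mul, exp_log (by positivity)]
  exact_mod_cast (Nat.factorial_le_pow K).trans (Nat.pow_le_pow_left K.le_succ K)

theorem add_mul_log_succ_le {C x ℓ : ℝ} (hC : 0 < C) (hx : 1 ≤ x) (hxℓ : x ≤ ℓ) (hℓ : 2 ≤ ℓ)
    {K : ℕ} (hK : (K : ℝ) ≤ 4 * C * x) :
    4 * C * x + K * log (K + 1) ≤ 4 * C * ((1 + log (4 * C + 1)) / log 2 + 1) * x * log ℓ := by
  have hlogK : log (K + 1) ≤ log (4 * C + 1) + log ℓ := by
    rw [← log_mul (by positivity) (by positivity)]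
    exact log_le_log (by positivity) (by nlinarith)
  have hlog2 : 0 < log 2 := log_pos one_lt_two
  have hL : 0 ≤ log (4 * C + 1) := log_nonneg (by linarith)
  calc 4 * C * x + K * log (K + 1) ≤ 4 * C * x + 4 * C * x * (log (4 * C + 1) + log ℓ) := by
        gcongr
        exact log_nonneg (by simp)
    _ = 4 * C * x * (1 + log (4 * C + 1)) * 1 + 4 * C * x * log ℓ := by ring
    _ ≤ 4 * C * x * (1 + log (4 * C + 1)) * (log ℓ / log 2) + 4 * C * x * log ℓ := by
        gcongr
        exact (one_le_div hlog2).mpr (log_le_log two_pos hℓ)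
    _ = _ := by ring

theorem mul_mul_factorial_le_exp {C α : ℝ} (hC : 0 < C) (hα₀ : 0 < α) (hα₁ : α < 1)
    {ℓ : ℕ} (hℓ : 2 ≤ ℓ) {N₁ N₂ D₁ D₂ : ℕ}
    (hD₁ : (D₁ : ℝ) ≤ C * (ℓ : ℝ) ^ α) (hD₂ : (D₂ : ℝ) ≤ C * ((3 * ℓ : ℕ) : ℝ) ^ α)
    (hN₁ : (N₁ : ℝ) ≤ exp (C * (ℓ : ℝ) ^ α))
    (hN₂ : (N₂ : ℝ) ≤ exp (C * ((3 * ℓ : ℕ) : ℝ) ^ α)) :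
    (N₁ * N₂ * (D₁ + D₂)! : ℝ) ≤
      exp (4 * C * ((1 + log (4 * C + 1)) / log 2 + 1) * (ℓ : ℝ) ^ α * log ℓ) := by
  set x := (ℓ : ℝ) ^ α
  set K := D₁ + D₂
  have hℓ2 : (2 : ℝ) ≤ ℓ := by exact_mod_cast hℓ
  have hx1 : 1 ≤ x := one_le_rpow (by linarith) hα₀.le
  have hxℓ : x ≤ ℓ := (rpow_le_rpow_of_exponent_le (by linarith) hα₁.le).trans_eq (rpow_one _)
  have h3x : C * ((3 * ℓ : ℕ) : ℝ) ^ α ≤ 3 * C * x := by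
    rw [Nat.cast_mul, Nat.cast_ofNat, mul_assoc 3 C, mul_left_comm]
    gcongr
    exact mul_rpow_le_mul_rpow (by norm_num) (by positivity) hα₁.le
  have hK : (K : ℝ) ≤ 4 * C * x := by push_cast [K]; linarith
  calc (N₁ * N₂ * K ! : ℝ) ≤ exp (C * x) * exp (3 * C * x) * exp (K * log (K + 1)) := by
        gcongr
        · exact hN₂.trans (exp_le_exp.mpr h3x)
        · exact factorial_le_exp_mul_log K
    _ = exp (4 * C * x + K * log (K + 1)) := by rw [← exp_add, ← exp_add]; ring_nf
    _ ≤ _ := exp_le_exp.mpr (add_mul_log_succ_le hC hx1 hxℓ hℓ2 hK)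

end

/-- **Counting the third factor:** if `Δ_ρ^S(m) ≤ C m^α` and `N_ρ^S(m) ≤ exp(C m^α)`
for all `m ≥ 1`, with `C > 0` and `0 < α < 1`, then there is a constant `C₃ > 0` with
`|P_3(ℓ)| ≤ exp(C₃ ℓ^α log ℓ)` for every sufficiently large `n` and every `ℓ ≤ r_n/3`
(with `2 ≤ ℓ`, so that `log ℓ > 0`). -/
theorem counting_p3 (C α : ℝ) (hC : 0 < C) (hα₀ : 0 < α) (hα₁ : α < 1)
    (hyp : ∀ m : ℕ, 1 ≤ m →
      (DeltaB m : ℝ) ≤ C * (m : ℝ) ^ α ∧ (NorbB m : ℝ) ≤ Real.exp (C * (m : ℝ) ^ α)) :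
    ∃ C₃ : ℝ, 0 < C₃ ∧ ∃ N : ℕ, ∀ n : ℕ, N ≤ n →
      ∀ ℓ : ℕ, 2 ≤ ℓ → ℓ ≤ 2 ^ (n / 2) / 3 →
      (Nat.card (Pjset n 3 ℓ) : ℝ) ≤ Real.exp (C₃ * (ℓ : ℝ) ^ α * Real.log ℓ) := by
  refine ⟨4 * C * ((1 + Real.log (4 * C + 1)) / Real.log 2 + 1), ?_, 0, fun n _ ℓ hℓ _ => ?_⟩
  · have := Real.log_nonneg (by linarith : (1 : ℝ) ≤ 4 * C + 1)
    have := Real.log_pos one_lt_two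
    positivity
  obtain ⟨hD₁, hN₁⟩ := hyp ℓ (by omega)
  obtain ⟨hD₂, hN₂⟩ := hyp (3 * ℓ) (by omega)
  calc (Nat.card (Pjset n 3 ℓ) : ℝ)
      ≤ NorbB ℓ * NorbB (3 * ℓ) * (DeltaB ℓ + DeltaB (3 * ℓ))! := by
        exact_mod_cast card_Pjset_three_le n ℓ
    _ ≤ _ := mul_mul_factorial_le_exp hC hα₀ hα₁ hℓ hD₁ hD₂ hN₁ hN₂
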